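/- Let p be an odd prime, G a cyclic group of order p^n with fixed generator σ, and H_t the subgroup generated by σ^{p^t}. Fix nonnegative integers m_0,…,m_n and index pairs (t,j) with 0 ≤ t ≤ n, 1 ≤ j ≤ m_t. Let M = ⊕_{(t,j)} ℤ_p[G/H_t]·e_{(t,j)} and M' = ⊕_{(t,j)} ℤ_p[G/H_t]·P_{(t,j)} be ℤ_p[G]-modules, each given as a direct sum of free ℤ_p[G/H_t]-modules of rank one on the indicated generators. Let Φ: M → M' be a ℤ_p[G]-module isomorphism, and choose any elements Φ_{(t,j),(s,i)} ∈ ℤ_p[G] such that Φ(e_{(s,i)}) = Σ_{(t,j)} Φ_{(t,j),(s,i)}·P_{(t,j)} for all (s,i). Then for every character ψ: G → ℂ_p^× (with t_ψ defined by ker(ψ) = H_{t_ψ}), the determinant det(ψ(Φ_{t_ψ})) of the matrix obtained by applying ψ entrywise to the submatrix Φ_{t_ψ} := (Φ_{(t,j),(s,i)})_{t ≥ t_ψ, s ≥ t_ψ} is a unit of the ring ℤ_p[ψ] generated over ℤ_p by the values of ψ. -/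

import Mathlib

open scoped Classical

/-- Index pairs `(t, j)` with `0 ≤ t ≤ n` and `1 ≤ j ≤ m t`. -/
abbrev Idx (n : ℕ) (m : Fin (n + 1) → ℕ) : Type :=
  Σ t : Fin (n + 1), Fin (m t)

/-- The index type for the `ℤ_p`-basis of `⊕_{(t,j)} ℤ_p[G/H_t]`. -/
abbrev BIdx (p n : ℕ) (m : Fin (n + 1) → ℕ) (G : Type) [Group G] (σ : G) : Type :=
  Σ ti : Idx n m, G ⧸ Subgroup.zpowers (σ ^ p ^ (ti.1 : ℕ))

/-! Extend `ψ` to the algebra map `f : ℤ_p[G] → K`. For `t ≥ t_ψ` the character `ψ` is trivial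
on `H_t`, so taking the `P_{(t,j)}`-component of an element of `M'` and applying `ψ` to it gives a
functional `λ_{(t,j)}` with `λ(a • x) = f(a) λ(x)`. If `s < t_ψ`, then `σ^{p^s}` fixes `e_{(s,i)}`
while `ψ(σ^{p^s}) ≠ 1`, so `λ_{(t,j)}(Φ e_{(s,i)}) = f(Φ_{(t,j),(s,i)})` vanishes: `f(Φ)` is block
triangular. Writing `Φ⁻¹(P_k) = ∑ Ψ_{ik} e_i` and applying `λ_{(t,j)}` to `P_k = Φ(Φ⁻¹ P_k)` shows
that the rows `t ≥ t_ψ` of `f(Φ) f(Ψ)` are those of the identity; by triangularity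
`f(Φ_{t_ψ}) f(Ψ_{t_ψ}) = 1`, and both determinants lie in `ℤ_p[ψ]`. -/

open MonoidAlgebra

section Group
variable {G : Type*} [Group G]

theorem Subgroup.zpowers_pow_pow_le (σ : G) (p : ℕ) {s t : ℕ} (h : s ≤ t) :
    Subgroup.zpowers (σ ^ p ^ t) ≤ Subgroup.zpowers (σ ^ p ^ s) := by
  obtain ⟨k, hk⟩ := pow_dvd_pow p h
  rw [Subgroup.zpowers_le, hk, pow_mul]
  exact Subgroup.pow_mem _ (Subgroup.mem_zpowers _) k

theorem pow_prime_pow_notMem_zpowers {σ : G} {p n s t : ℕ} [Fact p.Prime]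
    (hσ : orderOf σ = p ^ n) (hst : s < t) (htn : t ≤ n) :
    σ ^ p ^ s ∉ Subgroup.zpowers (σ ^ p ^ t) := by
  intro h
  have hp := (Fact.out : p.Prime).one_lt
  have horder : ∀ u ≤ n, orderOf (σ ^ p ^ u) = p ^ (n - u) := fun u hu => by
    rw [orderOf_pow_of_dvd (by positivity) (hσ ▸ pow_dvd_pow p hu), hσ, Nat.pow_div hu hp.le]
  have := orderOf_dvd_of_mem_zpowers h
  rw [horder s (by omega), horder t htn, Nat.pow_dvd_pow_iff_le_right hp] at this
  omega

theorem MonoidHom.map_mk_out {K : Type*} [MulOneClass K] (ψ : G →* K) {H : Subgroup G}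
    (hH : H ≤ ψ.ker) (g : G) : ψ (QuotientGroup.mk g : G ⧸ H).out = ψ g := by
  obtain ⟨h, hh⟩ := QuotientGroup.mk_out_eq_mul H g
  rw [hh, map_mul, hH h.2, mul_one]

end Group

theorem MonoidAlgebra.lift_mem_adjoin_range {R A G : Type*} [CommSemiring R] [Semiring A]
    [Algebra R A] [Monoid G] (ψ : G →* A) (a : MonoidAlgebra R G) :
    lift R A G ψ a ∈ Algebra.adjoin R (Set.range ψ) := by
  induction a using MonoidAlgebra.induction_on with
  | of g => simpa using Algebra.subset_adjoin (Set.mem_range_self g)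
  | add x y hx hy => simpa using add_mem hx hy
  | smul r x hx => simpa using Subalgebra.smul_mem _ hx r

theorem Subalgebra.det_mem {R S n : Type*} [CommRing R] [CommRing S] [Algebra R S]
    [Fintype n] [DecidableEq n] {O : Subalgebra R S} {A : Matrix n n S}
    (hA : ∀ i j, A i j ∈ O) : A.det ∈ O := by
  have : A = (Matrix.of fun i j => (⟨A i j, hA i j⟩ : O)).map O.val := rfl
  rw [this, ← AlgHom.mapMatrix_apply, ← AlgHom.map_det]
  exact SetLike.coe_mem _

theorem Matrix.toBlock_mul_toBlock_eq_one {ι R : Type*} [Fintype ι] [DecidableEq ι]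
    [CommRing R] (p : ι → Prop) [DecidablePred p] {A B : Matrix ι ι R}
    (hAB : (A * B).toBlock p p = 1) (hA : A.toBlock p (fun i => ¬p i) = 0) :
    A.toBlock p p * B.toBlock p p = 1 := by
  rw [← hAB, Matrix.toBlock_mul_eq_add p p p, hA, Matrix.zero_mul, add_zero]

section PermutationModule

variable {R G K ι M : Type*} [CommRing R] [Group G] [CommRing K] [Algebra R K]
  {H : ι → Subgroup G} [AddCommGroup M] [Module R M]

/-- The coordinate along `b ⟨j, 1⟩` in `K ⊗_{R[G]} M`, where `R[G]` acts on `K` through `ψ`.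
It uses an arbitrary representative of each coset, so it is only meaningful when `H j ≤ ψ.ker`. -/
noncomputable def charCoord (b : Module.Basis (Σ i, G ⧸ H i) R M) (ψ : G →* K) (j : ι) :
    M →ₗ[R] K :=
  b.constr R fun x => if x.1 = j then ψ x.2.out else 0

variable {e : ι → M} {b : Module.Basis (Σ i, G ⧸ H i) R M}

theorem charCoord_basis (ψ : G →* K) (j : ι) (x : Σ i, G ⧸ H i) :
    charCoord b ψ j (b x) = if x.1 = j then ψ x.2.out else 0 :=
  b.constr_basis R _ x

variable [Module (MonoidAlgebra R G) M]

theorem charCoord_apply (hb : ∀ i g, b ⟨i, QuotientGroup.mk g⟩ = of R G g • e i)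
    {ψ : G →* K} {j : ι} (hH : H j ≤ ψ.ker) (i : ι) :
    charCoord b ψ j (e i) = if i = j then 1 else 0 := by
  have he : e i = b ⟨i, (1 : G)⟩ := by rw [hb, map_one, one_smul]
  rw [he, charCoord_basis]
  split_ifs with hij
  · subst hij
    rw [ψ.map_mk_out hH, map_one]
  · rfl

theorem of_smul_eq_self (hb : ∀ i g, b ⟨i, QuotientGroup.mk g⟩ = of R G g • e i)
    {i : ι} {g : G} (hg : g ∈ H i) : of R G g • e i = e i := by
  have hg1 : (QuotientGroup.mk g : G ⧸ H i) = QuotientGroup.mk 1 :=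
    QuotientGroup.eq.2 (by simpa using hg)
  rw [← hb, hg1, hb, map_one, one_smul]

variable [IsScalarTower R (MonoidAlgebra R G) M]

theorem charCoord_of_smul (hb : ∀ i g, b ⟨i, QuotientGroup.mk g⟩ = of R G g • e i)
    {ψ : G →* K} {j : ι} (hH : H j ≤ ψ.ker) (g : G) (x : M) :
    charCoord b ψ j (of R G g • x) = ψ g * charCoord b ψ j x := by
  suffices (charCoord b ψ j).comp (DistribSMul.toLinearMap R M (of R G g)) =
      ψ g • charCoord b ψ j from LinearMap.congr_fun this x
  refine b.ext fun ⟨i, q⟩ => ?_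
  induction q using QuotientGroup.induction_on with | H g' => ?_
  have hgg' : of R G g • b ⟨i, g'⟩ = b ⟨i, (g * g' : G)⟩ := by
    rw [hb, hb, smul_smul, ← map_mul]
  rw [LinearMap.comp_apply, DistribSMul.toLinearMap_apply, hgg', LinearMap.smul_apply,
    charCoord_basis, charCoord_basis, smul_eq_mul]
  split_ifs with hij
  · subst hij
    rw [ψ.map_mk_out hH, ψ.map_mk_out hH, map_mul]
  · rw [mul_zero]

theorem charCoord_smul (hb : ∀ i g, b ⟨i, QuotientGroup.mk g⟩ = of R G g • e i)
    {ψ : G →* K} {j : ι} (hH : H j ≤ ψ.ker) (a : MonoidAlgebra R G) (x : M) :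
    charCoord b ψ j (a • x) = lift R K G ψ a * charCoord b ψ j x := by
  induction a using MonoidAlgebra.induction_on with
  | of g => rw [charCoord_of_smul hb hH, lift_of]
  | add a a' ha ha' => rw [add_smul, map_add, ha, ha', map_add, add_mul]
  | smul r a ha => rw [smul_assoc, map_smul, ha, map_smul, smul_mul_assoc]

theorem charCoord_sum_smul [Fintype ι]
    (hb : ∀ i g, b ⟨i, QuotientGroup.mk g⟩ = of R G g • e i)
    {ψ : G →* K} {j : ι} (hH : H j ≤ ψ.ker) (c : ι → MonoidAlgebra R G) :
    charCoord b ψ j (∑ i, c i • e i) = lift R K G ψ (c j) := by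
  simp only [map_sum, charCoord_smul hb hH, charCoord_apply hb hH, mul_ite, mul_one, mul_zero,
    Finset.sum_ite_eq', Finset.mem_univ, if_true]

theorem exists_sum_smul_eq [Fintype ι]
    (hb : ∀ i g, b ⟨i, QuotientGroup.mk g⟩ = of R G g • e i)
    (x : M) : ∃ c : ι → MonoidAlgebra R G, ∑ i, c i • e i = x := by
  rw [← Submodule.mem_span_range_iff_exists_fun]
  suffices Submodule.span R (Set.range b) ≤
      (Submodule.span (MonoidAlgebra R G) (Set.range e)).restrictScalars R by
    exact this (b.span_eq ▸ Submodule.mem_top)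
  refine Submodule.span_le.2 (Set.range_subset_iff.2 fun ⟨i, q⟩ => ?_)
  induction q using QuotientGroup.induction_on with | H g => ?_
  rw [hb]
  exact Submodule.smul_mem _ _ (Submodule.subset_span (Set.mem_range_self i))

end PermutationModule

section Isomorphism

variable {R G K ι M M' : Type*} [CommRing R] [CommGroup G] [CommRing K] [Algebra R K]
  [Fintype ι] {H : ι → Subgroup G} [AddCommGroup M] [Module (MonoidAlgebra R G) M]
  [AddCommGroup M'] [Module R M'] [Module (MonoidAlgebra R G) M']
  [IsScalarTower R (MonoidAlgebra R G) M'] {e : ι → M} {P : ι → M'}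
  {b' : Module.Basis (Σ i, G ⧸ H i) R M'}
  {Φ : M ≃ₗ[MonoidAlgebra R G] M'} {A : Matrix ι ι (MonoidAlgebra R G)}

theorem lift_apply_eq_zero_of_not_le_ker [IsDomain K] [Module R M]
    {b : Module.Basis (Σ i, G ⧸ H i) R M}
    (hb : ∀ i g, b ⟨i, QuotientGroup.mk g⟩ = of R G g • e i)
    (hb' : ∀ i g, b' ⟨i, QuotientGroup.mk g⟩ = of R G g • P i)
    (hA : ∀ i, Φ (e i) = ∑ j, A j i • P j) {ψ : G →* K} {i j : ι}
    (hj : H j ≤ ψ.ker) (hi : ¬H i ≤ ψ.ker) : lift R K G ψ (A j i) = 0 := by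
  obtain ⟨g, hg, hψg⟩ := SetLike.not_le_iff_exists.1 hi
  have hfix : charCoord b' ψ j (Φ (e i)) = ψ g * charCoord b' ψ j (Φ (e i)) := by
    conv_lhs => rw [← of_smul_eq_self hb hg, map_smul]
    exact charCoord_of_smul hb' hj g _
  rw [hA, charCoord_sum_smul hb' hj] at hfix
  have hprod : (ψ g - 1) * lift R K G ψ (A j i) = 0 := by
    rw [sub_mul, one_mul, ← hfix, sub_self]
  exact (mul_eq_zero.1 hprod).resolve_left (sub_ne_zero.2 hψg)

theorem lift_mul_apply_eq_one_apply_of_le_ker [DecidableEq ι]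
    (hb' : ∀ i g, b' ⟨i, QuotientGroup.mk g⟩ = of R G g • P i)
    (hA : ∀ i, Φ (e i) = ∑ j, A j i • P j) {B : Matrix ι ι (MonoidAlgebra R G)}
    (hB : ∀ k, ∑ i, B i k • e i = Φ.symm (P k)) {ψ : G →* K} {j : ι}
    (hj : H j ≤ ψ.ker) (k : ι) :
    lift R K G ψ ((A * B) j k) = (1 : Matrix ι ι K) j k := by
  have hP : P k = ∑ j', (A * B) j' k • P j' := by
    calc P k = Φ (∑ i, B i k • e i) := by rw [hB, Φ.apply_symm_apply]
      _ = ∑ i, ∑ j', (A j' i * B i k) • P j' := by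
        simp only [map_sum, map_smul, hA, Finset.smul_sum, smul_smul, mul_comm (B _ k)]
      _ = ∑ j', (A * B) j' k • P j' := by
        rw [Finset.sum_comm]
        simp only [Matrix.mul_apply, Finset.sum_smul]
  have hcoord := congrArg (charCoord b' ψ j) hP
  rw [charCoord_apply hb' hj, charCoord_sum_smul hb' hj] at hcoord
  rw [← hcoord, Matrix.one_apply]
  simp only [eq_comm]

end Isomorphism

theorem statement8_general (p : ℕ) [Fact p.Prime] (n : ℕ)
    (G : Type) [CommGroup G] [Fintype G]
    (σ : G) (hσ : ∀ g : G, g ∈ Subgroup.zpowers σ) (hcard : Fintype.card G = p ^ n)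
    (m : Fin (n + 1) → ℕ)
    (K : Type) [Field K] [Algebra ℤ_[p] K]
    (M : Type) [AddCommGroup M] [Module (MonoidAlgebra ℤ_[p] G) M]
    [Module ℤ_[p] M] [IsScalarTower ℤ_[p] (MonoidAlgebra ℤ_[p] G) M]
    (M' : Type) [AddCommGroup M'] [Module (MonoidAlgebra ℤ_[p] G) M']
    [Module ℤ_[p] M'] [IsScalarTower ℤ_[p] (MonoidAlgebra ℤ_[p] G) M']
    (e : Idx n m → M)
    (bM : Module.Basis (BIdx p n m G σ) ℤ_[p] M)
    (hbM : ∀ (ti : Idx n m) (g : G),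
      bM ⟨ti, QuotientGroup.mk g⟩ = MonoidAlgebra.of ℤ_[p] G g • e ti)
    (P : Idx n m → M')
    (bM' : Module.Basis (BIdx p n m G σ) ℤ_[p] M')
    (hbM' : ∀ (ti : Idx n m) (g : G),
      bM' ⟨ti, QuotientGroup.mk g⟩ = MonoidAlgebra.of ℤ_[p] G g • P ti)
    (Φ : M ≃ₗ[MonoidAlgebra ℤ_[p] G] M')
    (Φmat : Idx n m → Idx n m → MonoidAlgebra ℤ_[p] G)
    (hΦmat : ∀ si : Idx n m, Φ (e si) = ∑ tj : Idx n m, Φmat tj si • P tj)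
    (ψ : G →* K) (tψ : ℕ)
    (hker : ∀ g : G, ψ g = 1 ↔ g ∈ Subgroup.zpowers (σ ^ p ^ tψ)) :
    Matrix.det (Matrix.of fun r c : {x : Idx n m // tψ ≤ (x.1 : ℕ)} =>
        MonoidAlgebra.lift ℤ_[p] K G ψ (Φmat r.1 c.1)) ∈
      Algebra.adjoin ℤ_[p] (Set.range fun g : G => ψ g) ∧
    ∃ y ∈ Algebra.adjoin ℤ_[p] (Set.range fun g : G => ψ g),
      Matrix.det (Matrix.of fun r c : {x : Idx n m // tψ ≤ (x.1 : ℕ)} =>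
        MonoidAlgebra.lift ℤ_[p] K G ψ (Φmat r.1 c.1)) * y = 1 := by
  let S : Idx n m → Prop := fun x => tψ ≤ (x.1 : ℕ)
  have hσn : orderOf σ = p ^ n := by
    rw [orderOf_eq_card_of_forall_mem_zpowers hσ, Nat.card_eq_fintype_card, hcard]
  have hS : ∀ x, S x → Subgroup.zpowers (σ ^ p ^ (x.1 : ℕ)) ≤ ψ.ker := fun x hx g hg =>
    (hker g).2 (Subgroup.zpowers_pow_pow_le σ p hx hg)
  have hnotS : ∀ x y, S x → ¬S y → ¬Subgroup.zpowers (σ ^ p ^ (y.1 : ℕ)) ≤ ψ.ker :=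
    fun x y hx hy hle => pow_prime_pow_notMem_zpowers hσn (not_le.1 hy)
      (hx.trans (Nat.lt_succ_iff.1 x.1.2)) ((hker _).1 (hle (Subgroup.mem_zpowers _)))
  choose Ψ hΨ using fun k => exists_sum_smul_eq hbM (Φ.symm (P k))
  set f := lift ℤ_[p] K G ψ
  have hAB : ((Matrix.of Φmat).map f * (Matrix.of Ψ).transpose.map f).toBlock S S = 1 := by
    rw [← Matrix.toBlock_one_self S, ← Matrix.map_mul]
    ext r c
    exact lift_mul_apply_eq_one_apply_of_le_ker hbM' hΦmat (B := (Matrix.of Ψ).transpose) hΨ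
      (hS r r.2) c
  have hA : ((Matrix.of Φmat).map f).toBlock S (fun x => ¬S x) = 0 := by
    ext r c
    exact lift_apply_eq_zero_of_not_le_ker hbM hbM' hΦmat (hS r r.2) (hnotS r c r.2 c.2)
  have hdet := congrArg Matrix.det (Matrix.toBlock_mul_toBlock_eq_one S hAB hA)
  rw [Matrix.det_mul, Matrix.det_one] at hdet
  exact ⟨Subalgebra.det_mem fun _ _ => MonoidAlgebra.lift_mem_adjoin_range ψ _, _,
    Subalgebra.det_mem fun _ _ => MonoidAlgebra.lift_mem_adjoin_range ψ _, hdet⟩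

/-- Let `p` be an odd prime, `G` cyclic of order `p ^ n` with generator
`σ`, `H_t = ⟨σ ^ p ^ t⟩`.  Let `M = ⊕_{(t,j)} ℤ_p[G/H_t]·e_{(t,j)}` and
`M' = ⊕_{(t,j)} ℤ_p[G/H_t]·P_{(t,j)}` be `ℤ_p[G]`-modules given as direct sums of free
rank-one `ℤ_p[G/H_t]`-modules (encoded via `ℤ_p`-bases of `G/H_t`-translates of the
generators).  Let `Φ : M → M'` be a `ℤ_p[G]`-isomorphism with coefficients
`Φ_{(t,j),(s,i)} ∈ ℤ_p[G]` satisfying `Φ(e_{(s,i)}) = ∑_{(t,j)} Φ_{(t,j),(s,i)}·P_{(t,j)}`.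
Then for every character `ψ : G → ℂ_p^×` with `ker ψ = H_{t_ψ}`, the determinant of the
matrix obtained by applying `ψ` entrywise to the submatrix `(Φ_{(t,j),(s,i)})_{t,s ≥ t_ψ}`
is a unit of the subring `ℤ_p[ψ]` of `ℂ_p` generated over `ℤ_p` by the values of `ψ`.
(Here `ℂ_p` is modelled as an algebraically closed field `K` with compatible `ℤ_p`- and
`ℚ_p`-algebra structures.) -/
theorem statement8 (p : ℕ) [Fact p.Prime] (hp2 : p ≠ 2) (n : ℕ)
    (G : Type) [CommGroup G] [Fintype G]
    (σ : G) (hσ : ∀ g : G, g ∈ Subgroup.zpowers σ) (hcard : Fintype.card G = p ^ n)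
    (m : Fin (n + 1) → ℕ)
    (K : Type) [Field K] [Algebra ℚ_[p] K] [Algebra ℤ_[p] K]
    [IsScalarTower ℤ_[p] ℚ_[p] K] [IsAlgClosed K]
    (M : Type) [AddCommGroup M] [Module (MonoidAlgebra ℤ_[p] G) M]
    [Module ℤ_[p] M] [IsScalarTower ℤ_[p] (MonoidAlgebra ℤ_[p] G) M]
    (M' : Type) [AddCommGroup M'] [Module (MonoidAlgebra ℤ_[p] G) M']
    [Module ℤ_[p] M'] [IsScalarTower ℤ_[p] (MonoidAlgebra ℤ_[p] G) M']
    (e : Idx n m → M)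
    (bM : Module.Basis (BIdx p n m G σ) ℤ_[p] M)
    (hbM : ∀ (ti : Idx n m) (g : G),
      bM ⟨ti, QuotientGroup.mk g⟩ = MonoidAlgebra.of ℤ_[p] G g • e ti)
    (P : Idx n m → M')
    (bM' : Module.Basis (BIdx p n m G σ) ℤ_[p] M')
    (hbM' : ∀ (ti : Idx n m) (g : G),
      bM' ⟨ti, QuotientGroup.mk g⟩ = MonoidAlgebra.of ℤ_[p] G g • P ti)
    (Φ : M ≃ₗ[MonoidAlgebra ℤ_[p] G] M')
    (Φmat : Idx n m → Idx n m → MonoidAlgebra ℤ_[p] G)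
    (hΦmat : ∀ si : Idx n m, Φ (e si) = ∑ tj : Idx n m, Φmat tj si • P tj)
    (ψ : G →* K) (tψ : ℕ) (htψ : tψ ≤ n)
    (hker : ∀ g : G, ψ g = 1 ↔ g ∈ Subgroup.zpowers (σ ^ p ^ tψ)) :
    Matrix.det (Matrix.of fun r c : {x : Idx n m // tψ ≤ (x.1 : ℕ)} =>
        MonoidAlgebra.lift ℤ_[p] K G ψ (Φmat r.1 c.1)) ∈
      Algebra.adjoin ℤ_[p] (Set.range fun g : G => ψ g) ∧
    ∃ y ∈ Algebra.adjoin ℤ_[p] (Set.range fun g : G => ψ g),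
      Matrix.det (Matrix.of fun r c : {x : Idx n m // tψ ≤ (x.1 : ℕ)} =>
        MonoidAlgebra.lift ℤ_[p] K G ψ (Φmat r.1 c.1)) * y = 1 :=
  statement8_general p n G σ hσ hcard m K M M' e bM hbM P bM' hbM' Φ Φmat hΦmat ψ tψ hker
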